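/- arXiv:1710.10132 — 3 statements merged into one kernel-verified Lean document; each statement's English description precedes it below -/
import Mathlib

section
/- (Lemma 6.1, graph form: the interface-resolution assumption holds with γ = 1/4 when hM ≤ 1.) Let d ≥ 2 and let ψ : ℝ^{d−1} → ℝ be twice continuously differentiable with ψ(0) = 0 and Dψ(0) = 0. Let h > 0 and M ≥ 0 satisfy hM ≤ 1, and assume ‖D²ψ(ξ')‖_op ≤ M for all ξ' ∈ ℝ^{d−1} with ‖ξ'‖ ≤ h. Set x̂ := (0, −2h) ∈ ℝ^{d−1} × ℝ, and for each ξ' with ‖ξ'‖ ≤ h set s := (ξ', ψ(ξ')) and let T_s := { (t, ψ(ξ') + ⟨∇ψ(ξ'), t − ξ'⟩) : t ∈ ℝ^{d−1} } be the tangent hyperplane to the graph of ψ at s. Then, with the Euclidean norm on ℝ^{d−1} × ℝ ≅ ℝ^d, for every ξ' with ‖ξ'‖ ≤ h: (i) ‖x̂ − s‖ ≤ 4h, and (ii) dist(x̂, T_s) ≥ h/2. -/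
set_option maxHeartbeats 1000000


open Metric
open scoped RealInnerProductSpace

private lemma quadratic_aux (h c a T : ℝ) (hh : 0 < h) (hc : h ≤ c) (ha1 : -T ≤ a)
    (ha2 : a ≤ T) : (h / 2) ^ 2 ≤ T ^ 2 + (c + a) ^ 2 := by
  nlinarith [sq_nonneg (c + 2 * a), mul_nonneg (by linarith : (0:ℝ) ≤ T - a)
    (by linarith : (0:ℝ) ≤ T + a)]

/-- **Lemma 6.1 (graph form)**: the interface-resolution assumption (Assumption 1) holds
with `γ = 1/4` when `hM ≤ 1`. If `ψ : ℝ^{d-1} → ℝ` is `C²` with `ψ(0) = 0`,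
`Dψ(0) = 0`, and `‖D²ψ(ξ')‖ ≤ M` for `‖ξ'‖ ≤ h`, then with `x̂ := (0, -2h)` one has, for
every `ξ'` with `‖ξ'‖ ≤ h` and `s := (ξ', ψ(ξ'))`: `‖x̂ - s‖ ≤ 4h` and
`dist(x̂, T_s) ≥ h/2`, where `T_s` is the tangent hyperplane to the graph of `ψ` at `s`
(the product `ℝ^{d-1} × ℝ` being endowed with the Euclidean norm). -/
theorem interface_resolution_graph
    (d : ℕ) (hd : 2 ≤ d)
    (ψ : EuclideanSpace ℝ (Fin (d - 1)) → ℝ)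
    (hψ : ContDiff ℝ 2 ψ) (hψ0 : ψ 0 = 0) (hDψ0 : fderiv ℝ ψ 0 = 0)
    (h M : ℝ) (hh : 0 < h) (hM : 0 ≤ M) (hhM : h * M ≤ 1)
    (hcurv : ∀ ξ' : EuclideanSpace ℝ (Fin (d - 1)), ‖ξ'‖ ≤ h →
      ‖fderiv ℝ (fderiv ℝ ψ) ξ'‖ ≤ M)
    (xhat : WithLp 2 (EuclideanSpace ℝ (Fin (d - 1)) × ℝ))
    (hxhat : xhat = (WithLp.equiv 2 (EuclideanSpace ℝ (Fin (d - 1)) × ℝ)).symm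
      (0, -2 * h)) :
    ∀ ξ' : EuclideanSpace ℝ (Fin (d - 1)), ‖ξ'‖ ≤ h →
      ∀ s : WithLp 2 (EuclideanSpace ℝ (Fin (d - 1)) × ℝ),
        s = (WithLp.equiv 2 (EuclideanSpace ℝ (Fin (d - 1)) × ℝ)).symm (ξ', ψ ξ') →
      ∀ Ts : Set (WithLp 2 (EuclideanSpace ℝ (Fin (d - 1)) × ℝ)),
        Ts = {z | ∃ t : EuclideanSpace ℝ (Fin (d - 1)),
          z = (WithLp.equiv 2 (EuclideanSpace ℝ (Fin (d - 1)) × ℝ)).symm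
            (t, ψ ξ' + ⟪gradient ψ ξ', t - ξ'⟫)} →
      ‖xhat - s‖ ≤ 4 * h ∧ h / 2 ≤ Metric.infDist xhat Ts := by
  intro ξ' hξ' s hs Ts hTs
  have hψdiff : Differentiable ℝ ψ := hψ.differentiable (by norm_num)
  have hDdiff : Differentiable ℝ (fderiv ℝ ψ) :=
    (hψ.fderiv_right (m := 1) le_rfl).differentiable (by norm_num)
  -- Lipschitz bound for the derivative on the ball of radius h
  have hLip : ∀ x y : EuclideanSpace ℝ (Fin (d - 1)), ‖x‖ ≤ h → ‖y‖ ≤ h →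
      ‖fderiv ℝ ψ y - fderiv ℝ ψ x‖ ≤ M * ‖y - x‖ := by
    intro x y hx hy
    exact Convex.norm_image_sub_le_of_norm_fderiv_le
      (s := Metric.closedBall (0 : EuclideanSpace ℝ (Fin (d - 1))) h)
      (fun z _ => hDdiff z)
      (fun z hz => hcurv z (mem_closedBall_zero_iff.mp hz))
      (convex_closedBall (0 : EuclideanSpace ℝ (Fin (d - 1))) h)
      (mem_closedBall_zero_iff.mpr hx) (mem_closedBall_zero_iff.mpr hy)
  -- derivative bound
  have hgrad : ∀ x : EuclideanSpace ℝ (Fin (d - 1)), ‖x‖ ≤ h →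
      ‖fderiv ℝ ψ x‖ ≤ M * ‖x‖ := by
    intro x hx
    have := hLip 0 x (by simp [hh.le]) hx
    simpa [hDψ0] using this
  set r := ‖ξ'‖ with hr
  have hr0 : 0 ≤ r := norm_nonneg _
  have hL : ‖fderiv ℝ ψ ξ'‖ ≤ M * r := hgrad ξ' hξ'
  have hMr : M * r ≤ 1 := by nlinarith
  -- |ψ ξ'| ≤ M r ^ 2 ≤ h
  have hval : |ψ ξ'| ≤ M * r * r := by
    have := Convex.norm_image_sub_le_of_norm_fderiv_le
      (f := ψ) (C := M * r)
      (s := Metric.closedBall (0 : EuclideanSpace ℝ (Fin (d - 1))) r) (fun z _ => hψdiff z)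
      (fun z hz => by
        have hz' : ‖z‖ ≤ r := mem_closedBall_zero_iff.mp hz
        exact le_trans (hgrad z (hz'.trans hξ')) (by nlinarith))
      (convex_closedBall (0 : EuclideanSpace ℝ (Fin (d - 1))) r)
      (Metric.mem_closedBall_self hr0) (mem_closedBall_zero_iff.mpr le_rfl)
    simpa [hψ0, hr] using this
  have hvalh : |ψ ξ'| ≤ h := le_trans hval (by nlinarith)
  -- Taylor remainder bound: |ψ ξ' - Dψ(ξ') ξ'| ≤ M r ^ 2
  have htaylor : |ψ ξ' - fderiv ℝ ψ ξ' ξ'| ≤ M * r * r := by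
    set L := fderiv ℝ ψ ξ' with hLdef
    have hphidiff : ∀ z : EuclideanSpace ℝ (Fin (d - 1)),
        DifferentiableAt ℝ (fun x => ψ x - L x) z :=
      fun z => (hψdiff z).sub (L.differentiable z)
    have hfder : ∀ z : EuclideanSpace ℝ (Fin (d - 1)),
        fderiv ℝ (fun x => ψ x - L x) z = fderiv ℝ ψ z - L := by
      intro z
      rw [fderiv_fun_sub (hψdiff z) (L.differentiable z), L.fderiv]
    have key := Convex.norm_image_sub_le_of_norm_fderiv_le
      (f := fun x => ψ x - L x) (C := M * r)
      (s := segment ℝ (0 : EuclideanSpace ℝ (Fin (d - 1))) ξ') (fun z _ => hphidiff z)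
      (fun z hz => by
        rw [hfder z]
        obtain ⟨a, b, ha, hb, hab, rfl⟩ := hz
        have hzn : ‖a • (0 : EuclideanSpace ℝ (Fin (d - 1))) + b • ξ'‖ ≤ h := by
          simp only [smul_zero, zero_add, norm_smul, Real.norm_eq_abs, abs_of_nonneg hb]
          nlinarith
        have hsub : ‖(a • (0 : EuclideanSpace ℝ (Fin (d - 1))) + b • ξ') - ξ'‖ ≤ r := by
          have heq : (a • (0 : EuclideanSpace ℝ (Fin (d - 1))) + b • ξ') - ξ'
              = (b - 1) • ξ' := by
            rw [smul_zero, zero_add, sub_smul, one_smul]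
          rw [heq, norm_smul, Real.norm_eq_abs, abs_of_nonpos (by linarith)]
          nlinarith
        calc ‖fderiv ℝ ψ (a • (0 : EuclideanSpace ℝ (Fin (d - 1))) + b • ξ') - L‖
            ≤ M * ‖(a • (0 : EuclideanSpace ℝ (Fin (d - 1))) + b • ξ') - ξ'‖ :=
              hLip ξ' _ hξ' hzn
          _ ≤ M * r := by nlinarith
        )
      (convex_segment (0 : EuclideanSpace ℝ (Fin (d - 1))) ξ')
      (left_mem_segment ℝ 0 ξ') (right_mem_segment ℝ 0 ξ')
    simpa [hψ0, hr] using key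
  -- inner product with gradient is the derivative
  have hginner : ∀ v : EuclideanSpace ℝ (Fin (d - 1)),
      ⟪gradient ψ ξ', v⟫ = fderiv ℝ ψ ξ' v := fun v =>
    InnerProductSpace.toDual_symm_apply
  constructor
  · -- part (i)
    have hdiffeq : xhat - s =
        (WithLp.equiv 2 (EuclideanSpace ℝ (Fin (d - 1)) × ℝ)).symm
          ((0 : EuclideanSpace ℝ (Fin (d - 1))) - ξ', -2 * h - ψ ξ') := by
      rw [hxhat, hs, WithLp.equiv_symm_apply, ← WithLp.toLp_sub, Prod.mk_sub_mk]
    rw [hdiffeq, WithLp.prod_norm_eq_of_L2]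
    have h1 : ‖((WithLp.equiv 2 (EuclideanSpace ℝ (Fin (d - 1)) × ℝ)).symm
        ((0 : EuclideanSpace ℝ (Fin (d - 1))) - ξ', -2 * h - ψ ξ')).fst‖ = r := by
      simp [hr]
    have h2 : ‖((WithLp.equiv 2 (EuclideanSpace ℝ (Fin (d - 1)) × ℝ)).symm
        ((0 : EuclideanSpace ℝ (Fin (d - 1))) - ξ', -2 * h - ψ ξ')).snd‖
        = |(-2) * h - ψ ξ'| := rfl
    rw [h1, h2]
    have habs : |(-2) * h - ψ ξ'| ≤ 3 * h := by
      rw [abs_le] at hvalh ⊢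
      constructor <;> nlinarith
    have hsq : r ^ 2 + |(-2) * h - ψ ξ'| ^ 2 ≤ (4 * h) ^ 2 := by
      have : |(-2) * h - ψ ξ'| ^ 2 ≤ (3 * h) ^ 2 := by
        apply sq_le_sq' <;> [linarith [abs_nonneg ((-2) * h - ψ ξ')]; exact habs]
      nlinarith
    calc Real.sqrt (r ^ 2 + |(-2) * h - ψ ξ'| ^ 2) ≤ Real.sqrt ((4 * h) ^ 2) :=
          Real.sqrt_le_sqrt hsq
      _ = 4 * h := Real.sqrt_sq (by linarith)
  · -- part (ii)
    have hsmem : s ∈ Ts := by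
      rw [hTs]
      exact ⟨ξ', by simp [hs]⟩
    have hne : Ts.Nonempty := ⟨s, hsmem⟩
    by_contra hcon
    push_neg at hcon
    obtain ⟨y, hy, hdy⟩ := (infDist_lt_iff hne).mp hcon
    rw [hTs] at hy
    obtain ⟨t, rfl⟩ := hy
    set c : ℝ := 2 * h + ψ ξ' - fderiv ℝ ψ ξ' ξ' with hcdef
    have hc : h ≤ c := by
      rw [abs_le] at htaylor
      have : M * r * r ≤ h := by nlinarith
      simp only [hcdef]
      linarith [htaylor.1]
    set a : ℝ := fderiv ℝ ψ ξ' t with hadef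
    have ha : |a| ≤ ‖t‖ := by
      calc |a| ≤ ‖fderiv ℝ ψ ξ'‖ * ‖t‖ := (fderiv ℝ ψ ξ').le_opNorm t
        _ ≤ 1 * ‖t‖ := by
            apply mul_le_mul_of_nonneg_right _ (norm_nonneg t)
            exact le_trans hL hMr
        _ = ‖t‖ := one_mul _
    have hdiffeq : xhat - (WithLp.equiv 2 (EuclideanSpace ℝ (Fin (d - 1)) × ℝ)).symm
          (t, ψ ξ' + ⟪gradient ψ ξ', t - ξ'⟫) =
        (WithLp.equiv 2 (EuclideanSpace ℝ (Fin (d - 1)) × ℝ)).symm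
          ((0 : EuclideanSpace ℝ (Fin (d - 1))) - t,
            -2 * h - (ψ ξ' + ⟪gradient ψ ξ', t - ξ'⟫)) := by
      rw [hxhat, WithLp.equiv_symm_apply, ← WithLp.toLp_sub, Prod.mk_sub_mk]
    have hsnd : -2 * h - (ψ ξ' + ⟪gradient ψ ξ', t - ξ'⟫) = -(c + a) := by
      rw [inner_sub_right, hginner, hginner, hcdef, hadef]
      ring
    have hdist : dist xhat ((WithLp.equiv 2 (EuclideanSpace ℝ (Fin (d - 1)) × ℝ)).symm
        (t, ψ ξ' + ⟪gradient ψ ξ', t - ξ'⟫)) = Real.sqrt (‖t‖ ^ 2 + (c + a) ^ 2) := by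
      rw [dist_eq_norm, hdiffeq, WithLp.prod_norm_eq_of_L2]
      have e1 : ‖((WithLp.equiv 2 (EuclideanSpace ℝ (Fin (d - 1)) × ℝ)).symm
          ((0 : EuclideanSpace ℝ (Fin (d - 1))) - t,
            -2 * h - (ψ ξ' + ⟪gradient ψ ξ', t - ξ'⟫))).fst‖ = ‖t‖ := by
        rw [WithLp.equiv_symm_apply, WithLp.toLp_fst, zero_sub, norm_neg]
      have e2 : ((WithLp.equiv 2 (EuclideanSpace ℝ (Fin (d - 1)) × ℝ)).symm
          ((0 : EuclideanSpace ℝ (Fin (d - 1))) - t,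
            -2 * h - (ψ ξ' + ⟪gradient ψ ξ', t - ξ'⟫))).snd = -(c + a) := by
        rw [WithLp.equiv_symm_apply, WithLp.toLp_snd]; exact hsnd
      rw [e1, e2, Real.norm_eq_abs, abs_neg, sq_abs]
    rw [hdist] at hdy
    have hge : (h / 2) ≤ Real.sqrt (‖t‖ ^ 2 + (c + a) ^ 2) := by
      rw [Real.le_sqrt (by linarith) (by positivity)]
      rw [abs_le] at ha
      exact quadratic_aux h c a ‖t‖ hh hc ha.1 ha.2
    linarith
end

section
/- (Key inequality in the proof of Lemma 6.1.) Let d ≥ 2 and let ψ : ℝ^{d−1} → ℝ be twice continuously differentiable with ψ(0) = 0 and Dψ(0) = 0. Let h > 0 and M ≥ 0 satisfy hM ≤ 1, and assume ‖D²ψ(ξ')‖_op ≤ M for all ξ' with ‖ξ'‖ ≤ h. Then for every ξ' ∈ ℝ^{d−1} with ‖ξ'‖ ≤ h, one has −⟨ξ', ∇ψ(ξ')⟩ + ψ(ξ') + 2h ≥ h. -/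
open scoped RealInnerProductSpace

/-- **Key inequality in the proof of Lemma 6.1**: if `ψ : ℝ^{d-1} → ℝ` is `C²` with
`ψ(0) = 0`, `Dψ(0) = 0`, `h > 0`, `M ≥ 0`, `hM ≤ 1`, and `‖D²ψ(ξ')‖ ≤ M` for all
`‖ξ'‖ ≤ h`, then for every `ξ'` with `‖ξ'‖ ≤ h` one has
`−⟨ξ', ∇ψ(ξ')⟩ + ψ(ξ') + 2h ≥ h`. -/
theorem key_inequality_lemma61
    (d : ℕ) (hd : 2 ≤ d)
    (ψ : EuclideanSpace ℝ (Fin (d - 1)) → ℝ)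
    (hψ : ContDiff ℝ 2 ψ) (hψ0 : ψ 0 = 0) (hDψ0 : fderiv ℝ ψ 0 = 0)
    (h M : ℝ) (hh : 0 < h) (hM : 0 ≤ M) (hhM : h * M ≤ 1)
    (hcurv : ∀ ξ' : EuclideanSpace ℝ (Fin (d - 1)), ‖ξ'‖ ≤ h →
      ‖fderiv ℝ (fderiv ℝ ψ) ξ'‖ ≤ M) :
    ∀ ξ' : EuclideanSpace ℝ (Fin (d - 1)), ‖ξ'‖ ≤ h →
      -⟪ξ', gradient ψ ξ'⟫ + ψ ξ' + 2 * h ≥ h := by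
  intro ξ hξ
  have hψd : Differentiable ℝ ψ := hψ.differentiable (by norm_num)
  have hψ'd : Differentiable ℝ (fderiv ℝ ψ) :=
    (hψ.fderiv_right (m := 1) (by norm_num)).differentiable one_ne_zero
  -- φ t = ψ (t • ξ) - t * (fderiv ψ (t • ξ) ξ)
  set φ : ℝ → ℝ := fun t => ψ (t • ξ) - t * (fderiv ℝ ψ (t • ξ) ξ) with hφ
  have hline : ∀ t : ℝ, HasDerivAt (fun s : ℝ => s • ξ) ξ t := by
    intro t
    simpa using (hasDerivAt_id t).smul_const ξ
  have hφ' : ∀ t : ℝ, HasDerivAt φ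
      (-(t * (fderiv ℝ (fderiv ℝ ψ) (t • ξ) ξ ξ))) t := by
    intro t
    have h1 : HasDerivAt (fun s : ℝ => ψ (s • ξ)) (fderiv ℝ ψ (t • ξ) ξ) t :=
      (hψd (t • ξ)).hasFDerivAt.comp_hasDerivAt t (hline t)
    have h2 : HasDerivAt (fun s : ℝ => fderiv ℝ ψ (s • ξ))
        (fderiv ℝ (fderiv ℝ ψ) (t • ξ) ξ) t :=
      (hψ'd (t • ξ)).hasFDerivAt.comp_hasDerivAt t (hline t)
    have h3 : HasDerivAt (fun s : ℝ => fderiv ℝ ψ (s • ξ) ξ)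
        (fderiv ℝ (fderiv ℝ ψ) (t • ξ) ξ ξ) t := by
      have := h2.clm_apply (hasDerivAt_const t ξ)
      simpa using this
    have h4 : HasDerivAt (fun s : ℝ => s * (fderiv ℝ ψ (s • ξ) ξ))
        (1 * (fderiv ℝ ψ (t • ξ) ξ) + t * (fderiv ℝ (fderiv ℝ ψ) (t • ξ) ξ ξ)) t :=
      (hasDerivAt_id t).mul h3
    have := h1.sub h4
    exact this.congr_deriv (by ring)
  have hbound : ∀ t ∈ Set.Icc (0:ℝ) 1,
      ‖-(t * (fderiv ℝ (fderiv ℝ ψ) (t • ξ) ξ ξ))‖ ≤ h := by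
    intro t ht
    have ht0 := ht.1
    have ht1 := ht.2
    have hnt : ‖t • ξ‖ ≤ h := by
      rw [norm_smul, Real.norm_eq_abs, abs_of_nonneg ht0]
      calc t * ‖ξ‖ ≤ 1 * ‖ξ‖ := by
            exact mul_le_mul_of_nonneg_right ht1 (norm_nonneg _)
        _ = ‖ξ‖ := one_mul _
        _ ≤ h := hξ
    have h2 : |fderiv ℝ (fderiv ℝ ψ) (t • ξ) ξ ξ| ≤ M * ‖ξ‖ * ‖ξ‖ := by
      calc |fderiv ℝ (fderiv ℝ ψ) (t • ξ) ξ ξ|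
          ≤ ‖fderiv ℝ (fderiv ℝ ψ) (t • ξ) ξ‖ * ‖ξ‖ :=
            (fderiv ℝ (fderiv ℝ ψ) (t • ξ) ξ).le_opNorm ξ
        _ ≤ (‖fderiv ℝ (fderiv ℝ ψ) (t • ξ)‖ * ‖ξ‖) * ‖ξ‖ := by
            gcongr
            exact (fderiv ℝ (fderiv ℝ ψ) (t • ξ)).le_opNorm ξ
        _ ≤ M * ‖ξ‖ * ‖ξ‖ := by
            gcongr
            exact hcurv _ hnt
    rw [norm_neg, Real.norm_eq_abs, abs_mul, abs_of_nonneg ht0]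
    calc t * |fderiv ℝ (fderiv ℝ ψ) (t • ξ) ξ ξ|
        ≤ 1 * (M * ‖ξ‖ * ‖ξ‖) := by
          refine mul_le_mul ht1 h2 (abs_nonneg _) (by norm_num)
      _ = M * ‖ξ‖ * ‖ξ‖ := one_mul _
      _ ≤ M * h * h := by gcongr <;> exact norm_nonneg _ |>.trans hξ |> fun _ => hξ
      _ = h * M * h := by ring
      _ ≤ 1 * h := by gcongr
      _ = h := one_mul _
  have hmv : ‖φ 1 - φ 0‖ ≤ h * ‖(1:ℝ) - 0‖ :=
    (convex_Icc (0:ℝ) 1).norm_image_sub_le_of_norm_hasDerivWithin_le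
      (fun t ht => (hφ' t).hasDerivWithinAt)
      (fun t ht => hbound t ht)
      (Set.left_mem_Icc.2 zero_le_one) (Set.right_mem_Icc.2 zero_le_one)
  have hφ0 : φ 0 = 0 := by simp [hφ, hψ0]
  have hφ1 : φ 1 = ψ ξ - fderiv ℝ ψ ξ ξ := by simp [hφ]
  have hinner : ⟪ξ, gradient ψ ξ⟫ = fderiv ℝ ψ ξ ξ := by
    rw [real_inner_comm]
    exact InnerProductSpace.toDual_symm_apply
  rw [hφ0, sub_zero, hφ1, Real.norm_eq_abs] at hmv
  have : |ψ ξ - fderiv ℝ ψ ξ ξ| ≤ h := by simpa using hmv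
  rw [hinner]
  linarith [abs_le.mp this |>.1]
end

section
/- (Honest form of Lemma 6.2: an unfavorably thin interface cannot cut off both subdomain parts.) Let d ≥ 1, let Ω¹ and Ω² be disjoint open subsets of ℝ^d, and set Γ := ℝ^d \ (Ω¹ ∪ Ω²). Let T ⊆ ℝ^d, let x_T ∈ ℝ^d and r > 0 with B̄(x_T, r) ⊆ T, and suppose there exist s ∈ ℝ^d and a unit vector n ∈ ℝ^d such that T ∩ Γ ⊆ { y ∈ ℝ^d : |⟨y − s, n⟩| < r/3 }. Then there exist i ∈ {1, 2} and ỹ ∈ ℝ^d such that B̄(ỹ, r/3) ⊆ T ∩ Ω^i. -/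
open Metric
open scoped RealInnerProductSpace

/-- **Honest form of Lemma 6.2**: an unfavorably thin interface cannot cut off both
subdomain parts. If `Ω¹, Ω²` are disjoint open subsets of `ℝ^d` with complement
`Γ := ℝ^d \ (Ω¹ ∪ Ω²)`, `T` contains a closed ball `B̄(x_T, r)`, and `T ∩ Γ` is
contained in the open slab of half-width `r/3` around a hyperplane through `s` with unit
normal `n`, then `T` contains a closed ball of radius `r/3` entirely inside one of the
two sub-cells `T ∩ Ω^i`. -/
theorem thin_interface_cannot_cut_both
    (d : ℕ) (hd : 1 ≤ d)
    (Ω₁ Ω₂ : Set (EuclideanSpace ℝ (Fin d)))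
    (hΩ₁ : IsOpen Ω₁) (hΩ₂ : IsOpen Ω₂) (hdisj : Disjoint Ω₁ Ω₂)
    (Γ : Set (EuclideanSpace ℝ (Fin d))) (hΓ : Γ = (Ω₁ ∪ Ω₂)ᶜ)
    (T : Set (EuclideanSpace ℝ (Fin d)))
    (xT : EuclideanSpace ℝ (Fin d)) (r : ℝ) (hr : 0 < r)
    (hball : closedBall xT r ⊆ T)
    (s n : EuclideanSpace ℝ (Fin d)) (hn : ‖n‖ = 1)
    (hslab : T ∩ Γ ⊆ {y : EuclideanSpace ℝ (Fin d) | |⟪y - s, n⟫| < r / 3}) :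
    (∃ y : EuclideanSpace ℝ (Fin d), closedBall y (r / 3) ⊆ T ∩ Ω₁) ∨
    (∃ y : EuclideanSpace ℝ (Fin d), closedBall y (r / 3) ⊆ T ∩ Ω₂) := by
  set c : ℝ := ⟪xT - s, n⟫ with hc
  set t : ℝ := if 0 ≤ c then 2 * r / 3 else -(2 * r / 3) with ht
  set y : EuclideanSpace ℝ (Fin d) := xT + t • n with hy
  have habs : |t| = 2 * r / 3 := by
    rw [ht]; split_ifs <;> simp [abs_of_nonneg, abs_of_nonpos, le_of_lt hr] <;> positivity
  have hct : 2 * r / 3 ≤ |c + t| := by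
    rw [ht]; split_ifs with h
    · rw [abs_of_nonneg (by linarith [show (0:ℝ) ≤ 2*r/3 by positivity])]; linarith
    · rw [abs_of_nonpos (by linarith [show (0:ℝ) ≤ 2*r/3 by positivity])]; linarith
  -- the small ball is inside the big ball, hence inside T
  have hsub : closedBall y (r / 3) ⊆ closedBall xT r := by
    intro z hz
    simp only [mem_closedBall, dist_eq_norm] at hz ⊢
    have h1 : ‖z - xT‖ ≤ ‖z - y‖ + ‖y - xT‖ := by
      have := norm_add_le (z - y) (y - xT); simpa using this
    have h2 : ‖y - xT‖ = 2 * r / 3 := by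
      rw [hy]; simp [norm_smul, hn, habs]
    linarith
  have hsubT : closedBall y (r / 3) ⊆ T := hsub.trans hball
  -- the small ball avoids Γ
  have hΓdisj : ∀ z ∈ closedBall y (r / 3), z ∉ Γ := by
    intro z hz hzΓ
    have hzT : z ∈ T := hsubT hz
    have hlt : |⟪z - s, n⟫| < r / 3 := hslab ⟨hzT, hzΓ⟩
    have heq : ⟪z - s, n⟫ = ⟪z - y, n⟫ + (c + t) := by
      have : z - s = (z - y) + (xT - s) + t • n := by rw [hy]; abel
      rw [this, inner_add_left, inner_add_left, real_inner_smul_left,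
        real_inner_self_eq_norm_sq, hn]
      ring
    have hzy : |⟪z - y, n⟫| ≤ r / 3 := by
      calc |⟪z - y, n⟫| ≤ ‖z - y‖ * ‖n‖ := abs_real_inner_le_norm _ _
        _ ≤ r / 3 := by rw [hn, mul_one]; simpa [dist_eq_norm] using hz
    have : 2 * r / 3 - r / 3 ≤ |⟪z - s, n⟫| := by
      calc 2 * r / 3 - r / 3 ≤ |c + t| - |⟪z - y, n⟫| := by linarith
        _ ≤ |⟪z - y, n⟫ + (c + t)| := by
            have := abs_sub_abs_le_abs_sub (c + t) (-(⟪z - y, n⟫))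
            simp only [abs_neg] at this
            calc |c + t| - |⟪z - y, n⟫| ≤ |c + t - -⟪z - y, n⟫| := this
              _ = |⟪z - y, n⟫ + (c + t)| := by ring_nf
        _ = |⟪z - s, n⟫| := by rw [heq]
    linarith
  have hsubU : closedBall y (r / 3) ⊆ Ω₁ ∪ Ω₂ := by
    intro z hz
    by_contra h
    exact hΓdisj z hz (by rw [hΓ]; exact h)
  have hpre : IsPreconnected (closedBall y (r / 3)) :=
    (convex_closedBall y (r / 3)).isPreconnected
  rcases hpre.subset_or_subset hΩ₁ hΩ₂ hdisj hsubU with h | h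
  · exact Or.inl ⟨y, Set.subset_inter hsubT h⟩
  · exact Or.inr ⟨y, Set.subset_inter hsubT h⟩
end
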